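/- arXiv:1105.1611 — 8 statements merged into one kernel-verified Lean document; each statement's English description precedes it below -/
import Mathlib

section
/- If (A,B) and (C,D) are separations with A ⊆ C and (C,D) is tight, then (A,B) ≤ (C,D). -/
open Set

variable {V : Type*}

/-- A separation of a graph `G`: a pair of vertex sets covering `V` such that
every edge lies within one of the sides. -/
def IsSep (G : SimpleGraph V) (p : Set V × Set V) : Prop :=
  p.1 ∪ p.2 = Set.univ ∧
    ∀ x y, G.Adj x y → (x ∈ p.1 ∧ y ∈ p.1) ∨ (x ∈ p.2 ∧ y ∈ p.2)

/-- The partial order on separations: `(A,B) ≤ (C,D)` iff `A ⊆ C` and `B ⊇ D`. -/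
def SepLE (p q : Set V × Set V) : Prop :=
  p.1 ⊆ q.1 ∧ q.2 ⊆ p.2

/-- The inverse of a separation. -/
def flipSep (p : Set V × Set V) : Set V × Set V := (p.2, p.1)

/-- A separation is proper if both sides minus the other are nonempty. -/
def IsProper (p : Set V × Set V) : Prop :=
  (p.1 \ p.2).Nonempty ∧ (p.2 \ p.1).Nonempty

/-- `≤`-comparability of separations. -/
def SepComparable (p q : Set V × Set V) : Prop := SepLE p q ∨ SepLE q p

/-- Two separations are nested if one is comparable with the other or its inverse. -/
def Nested (p q : Set V × Set V) : Prop :=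
  SepComparable p q ∨ SepComparable p (flipSep q)

/-- A separation `(A,B)` separates a vertex set `I` if `I` meets both `A∖B` and `B∖A`. -/
def SepSeparates (p : Set V × Set V) (I : Set V) : Prop :=
  (I ∩ (p.1 \ p.2)).Nonempty ∧ (I ∩ (p.2 \ p.1)).Nonempty

/-- A set is `S`-inseparable if no separation in `S` separates it. -/
def Insep (S : Set (Set V × Set V)) (U : Set V) : Prop :=
  ∀ p ∈ S, ¬ SepSeparates p U

/-- An `S`-block: a maximal `S`-inseparable vertex set. -/
def IsBlock (S : Set (Set V × Set V)) (b : Set V) : Prop :=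
  Insep S b ∧ ∀ b', Insep S b' → b ⊆ b' → b' = b

/-- A separation system: a symmetric set of proper separations. -/
def SepSystem (G : SimpleGraph V) (N : Set (Set V × Set V)) : Prop :=
  (∀ p ∈ N, IsSep G p ∧ IsProper p) ∧ ∀ p ∈ N, flipSep p ∈ N

/-- A nested separation system. -/
def NestedSys (G : SimpleGraph V) (N : Set (Set V × Set V)) : Prop :=
  SepSystem G N ∧ ∀ p ∈ N, ∀ q ∈ N, Nested p q

/-- Strict version of `SepLE`. -/
def SepLT (p q : Set V × Set V) : Prop := SepLE p q ∧ p ≠ q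

/-- `p` is a predecessor of `q` in `(N, ≤)`. -/
def SepPred (N : Set (Set V × Set V)) (p q : Set V × Set V) : Prop :=
  p ∈ N ∧ q ∈ N ∧ SepLT p q ∧ ∀ r ∈ N, ¬ (SepLT p r ∧ SepLT r q)

/-- The relation `∼` on a nested separation system `N`:
`(A,B) ∼ (C,D)` iff they are equal or `(B,A)` is a predecessor of `(C,D)` in `(N,≤)`. -/
def SimRel (N : Set (Set V × Set V)) (p q : Set V × Set V) : Prop :=
  p = q ∨ SepPred N (flipSep p) q

/-- The `∼`-equivalence class of a separation `p ∈ N`. -/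
def classOf (N : Set (Set V × Set V)) (p : Set V × Set V) : Set (Set V × Set V) :=
  {q | q ∈ N ∧ SimRel N p q}

/-- The part `V_t` associated with a node `t` of the structure tree. -/
def Vpart (t : Set (Set V × Set V)) : Set V := {v | ∀ p ∈ t, v ∈ p.1}

/-- The four corner separations of the cross-diagram of two separations. -/
def cornerSep (p q : Set V × Set V) : Fin 4 → Set V × Set V :=
  ![(p.1 ∩ q.1, p.2 ∪ q.2), (p.1 ∩ q.2, p.2 ∪ q.1),
    (p.2 ∩ q.1, p.1 ∪ q.2), (p.2 ∩ q.2, p.1 ∪ q.1)]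

/-- `p` weakly separates `I₁` and `I₂`. -/
def WeaklySep (p : Set V × Set V) (I₁ I₂ : Set V) : Prop :=
  (I₁ ⊆ p.1 ∧ I₂ ⊆ p.2) ∨ (I₁ ⊆ p.2 ∧ I₂ ⊆ p.1)

/-- `S` separates the collection `I` well. -/
def SeparatesWell (S : Set (Set V × Set V)) (I : Set (Set V)) : Prop :=
  ∀ p ∈ S, ∀ q ∈ S, ¬ Nested p q →
    ∀ I₁ ∈ I, ∀ I₂ ∈ I, I₁ ⊆ p.1 ∩ q.1 → I₂ ⊆ p.2 ∩ q.2 →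
      ∃ r ∈ S, I₁ ⊆ r.1 ∧ r.1 ⊆ p.1 ∩ q.1 ∧ p.2 ∪ q.2 ⊆ r.2

/-- An extremal separation of a separation system `S`. -/
def Extremal (S : Set (Set V × Set V)) (p : Set V × Set V) : Prop :=
  ∀ q ∈ S, SepLE p q ∨ SepLE p (flipSep q)

/-- A tight separation: every vertex of the separator has neighbours on both sides. -/
def Tight (G : SimpleGraph V) (p : Set V × Set V) : Prop :=
  ∀ v ∈ p.1 ∩ p.2, (∃ x ∈ p.1 \ p.2, G.Adj v x) ∧ ∃ y ∈ p.2 \ p.1, G.Adj v y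

/-- If `(A,B)` and `(C,D)` are separations with `A ⊆ C` and `(C,D)` tight,
then `(A,B) ≤ (C,D)`. -/
theorem sepLE_of_tight [Fintype V] (G : SimpleGraph V) (p q : Set V × Set V)
    (hp : IsSep G p) (hq : IsSep G q) (hsub : p.1 ⊆ q.1) (ht : Tight G q) :
    SepLE p q := by
  refine ⟨hsub, fun v hv => ?_⟩
  by_contra hvB
  have hvA : v ∈ p.1 := by
    have := hp.1
    have h' : v ∈ p.1 ∪ p.2 := by rw [this]; trivial
    rcases h' with h | h
    · exact h
    · exact absurd h hvB
  have hvC : v ∈ q.1 := hsub hvA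
  obtain ⟨-, x, hx, hadj⟩ := ht v ⟨hvC, hv⟩
  rcases hp.2 v x hadj with ⟨-, hx1⟩ | ⟨h2, -⟩
  · exact hx.2 (hsub hx1)
  · exact hvB h2
end

section
/- If distinct separations (A,B), (C,D) of a graph satisfy (A,B) nested with (C,D), (C,D) nested with (E,F), but (A,B) not nested with (E,F), then (C,D) is nested with every corner separation of the cross-diagram of (A,B) and (E,F), and for one corner separation (I,J) of this diagram we have (C,D) ≤ (I,J) or (D,C) ≤ (I,J). -/
open Set

variable {V : Type*}

/-- If `(A,B) ∥ (C,D)` and `(C,D) ∥ (E,F)` but `(A,B) ∦ (E,F)`, then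
`(C,D)` is nested with every corner separation of the cross-diagram of `(A,B)` and
`(E,F)`, and for one corner separation `(I,J)` we have `(C,D) ≤ (I,J)` or
`(D,C) ≤ (I,J)`. -/
theorem nested_or_corner [Fintype V] (G : SimpleGraph V) (p q r : Set V × Set V)
    (hp : IsSep G p) (hpp : IsProper p) (hq : IsSep G q) (hqp : IsProper q)
    (hr : IsSep G r) (hrp : IsProper r) (hne : p ≠ q)
    (h1 : Nested p q) (h2 : Nested q r) (h3 : ¬ Nested p r) :
    (∀ i : Fin 4, Nested q (cornerSep p r i)) ∧
    ∃ i : Fin 4, SepLE q (cornerSep p r i) ∨ SepLE (flipSep q) (cornerSep p r i) := by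
  rcases h1 with (⟨hAC, hDB⟩ | ⟨hCA, hBD⟩) | (⟨hAD, hCB⟩ | ⟨hDA, hBC⟩) <;>
    rcases h2 with (⟨hCE, hFD⟩ | ⟨hEC, hDF⟩) | (⟨hCF, hED⟩ | ⟨hFC, hDE⟩)
  -- P1R1
  · exact absurd (Or.inl (Or.inl ⟨hAC.trans hCE, hFD.trans hDB⟩)) h3
  -- P1R2
  · refine ⟨fun i => ?_, 3, Or.inr ⟨subset_inter hDB hDF, union_subset hAC hEC⟩⟩
    fin_cases i
    · exact Or.inl (Or.inr ⟨inter_subset_left.trans hAC, hDB.trans subset_union_left⟩)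
    · exact Or.inl (Or.inr ⟨inter_subset_left.trans hAC, hDB.trans subset_union_left⟩)
    · exact Or.inl (Or.inr ⟨inter_subset_right.trans hEC, hDF.trans subset_union_right⟩)
    · exact Or.inr (Or.inr ⟨union_subset hAC hEC, subset_inter hDB hDF⟩)
  -- P1R3
  · exact absurd (Or.inr (Or.inl ⟨hAC.trans hCF, hED.trans hDB⟩)) h3
  -- P1R4
  · refine ⟨fun i => ?_, 2, Or.inr ⟨subset_inter hDB hDE, union_subset hAC hFC⟩⟩
    fin_cases i
    · exact Or.inl (Or.inr ⟨inter_subset_left.trans hAC, hDB.trans subset_union_left⟩)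
    · exact Or.inl (Or.inr ⟨inter_subset_left.trans hAC, hDB.trans subset_union_left⟩)
    · exact Or.inr (Or.inr ⟨union_subset hAC hFC, subset_inter hDB hDE⟩)
    · exact Or.inl (Or.inr ⟨inter_subset_right.trans hFC, hDE.trans subset_union_right⟩)
  -- P2R1
  · refine ⟨fun i => ?_, 0, Or.inl ⟨subset_inter hCA hCE, union_subset hBD hFD⟩⟩
    fin_cases i
    · exact Or.inl (Or.inl ⟨subset_inter hCA hCE, union_subset hBD hFD⟩)
    · exact Or.inr (Or.inl ⟨hCE.trans subset_union_right, inter_subset_right.trans hFD⟩)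
    · exact Or.inr (Or.inl ⟨hCA.trans subset_union_left, inter_subset_left.trans hBD⟩)
    · exact Or.inr (Or.inl ⟨hCA.trans subset_union_left, inter_subset_left.trans hBD⟩)
  -- P2R2
  · exact absurd (Or.inl (Or.inr ⟨hEC.trans hCA, hBD.trans hDF⟩)) h3
  -- P2R3
  · refine ⟨fun i => ?_, 1, Or.inl ⟨subset_inter hCA hCF, union_subset hBD hED⟩⟩
    fin_cases i
    · exact Or.inr (Or.inl ⟨hCF.trans subset_union_right, inter_subset_right.trans hED⟩)
    · exact Or.inl (Or.inl ⟨subset_inter hCA hCF, union_subset hBD hED⟩)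
    · exact Or.inr (Or.inl ⟨hCA.trans subset_union_left, inter_subset_left.trans hBD⟩)
    · exact Or.inr (Or.inl ⟨hCA.trans subset_union_left, inter_subset_left.trans hBD⟩)
  -- P2R4
  · exact absurd (Or.inr (Or.inr ⟨hFC.trans hCA, hBD.trans hDE⟩)) h3
  -- P3R1
  · refine ⟨fun i => ?_, 2, Or.inl ⟨subset_inter hCB hCE, union_subset hAD hFD⟩⟩
    fin_cases i
    · exact Or.inr (Or.inl ⟨hCB.trans subset_union_left, inter_subset_left.trans hAD⟩)
    · exact Or.inr (Or.inl ⟨hCB.trans subset_union_left, inter_subset_left.trans hAD⟩)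
    · exact Or.inl (Or.inl ⟨subset_inter hCB hCE, union_subset hAD hFD⟩)
    · exact Or.inr (Or.inl ⟨hCE.trans subset_union_right, inter_subset_right.trans hFD⟩)
  -- P3R2
  · exact absurd (Or.inr (Or.inl ⟨hAD.trans hDF, hEC.trans hCB⟩)) h3
  -- P3R3
  · refine ⟨fun i => ?_, 3, Or.inl ⟨subset_inter hCB hCF, union_subset hAD hED⟩⟩
    fin_cases i
    · exact Or.inr (Or.inl ⟨hCB.trans subset_union_left, inter_subset_left.trans hAD⟩)
    · exact Or.inr (Or.inl ⟨hCB.trans subset_union_left, inter_subset_left.trans hAD⟩)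
    · exact Or.inr (Or.inl ⟨hCF.trans subset_union_right, inter_subset_right.trans hED⟩)
    · exact Or.inl (Or.inl ⟨subset_inter hCB hCF, union_subset hAD hED⟩)
  -- P3R4
  · exact absurd (Or.inl (Or.inl ⟨hAD.trans hDE, hFC.trans hCB⟩)) h3
  -- P4R1
  · exact absurd (Or.inr (Or.inr ⟨hFD.trans hDA, hBC.trans hCE⟩)) h3
  -- P4R2
  · refine ⟨fun i => ?_, 1, Or.inr ⟨subset_inter hDA hDF, union_subset hBC hEC⟩⟩
    fin_cases i
    · exact Or.inl (Or.inr ⟨inter_subset_right.trans hEC, hDF.trans subset_union_right⟩)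
    · exact Or.inr (Or.inr ⟨union_subset hBC hEC, subset_inter hDA hDF⟩)
    · exact Or.inl (Or.inr ⟨inter_subset_left.trans hBC, hDA.trans subset_union_left⟩)
    · exact Or.inl (Or.inr ⟨inter_subset_left.trans hBC, hDA.trans subset_union_left⟩)
  -- P4R3
  · exact absurd (Or.inl (Or.inr ⟨hED.trans hDA, hBC.trans hCF⟩)) h3
  -- P4R4
  · refine ⟨fun i => ?_, 0, Or.inr ⟨subset_inter hDA hDE, union_subset hBC hFC⟩⟩
    fin_cases i
    · exact Or.inr (Or.inr ⟨union_subset hBC hFC, subset_inter hDA hDE⟩)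
    · exact Or.inl (Or.inr ⟨inter_subset_right.trans hFC, hDE.trans subset_union_right⟩)
    · exact Or.inl (Or.inr ⟨inter_subset_left.trans hBC, hDA.trans subset_union_left⟩)
    · exact Or.inl (Or.inr ⟨inter_subset_left.trans hBC, hDA.trans subset_union_left⟩)
end

section
/- If S is a set of separations of a finite graph G and b₁, b₂ are distinct S-blocks (maximal S-inseparable vertex sets), then some separation (A,B) ∈ S properly separates b₁ from b₂, i.e., b₁ ⊆ A, b₂ ⊆ B (up to swapping), and neither b₁ ⊆ A∩B nor b₂ ⊆ A∩B. -/
open Set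

variable {V : Type*}

/-- Distinct `S`-blocks are properly separated by some separation in `S`. -/
theorem blocks_separated [Fintype V] (G : SimpleGraph V) (S : Set (Set V × Set V))
    (hS : ∀ p ∈ S, IsSep G p) (b₁ b₂ : Set V)
    (h1 : IsBlock S b₁) (h2 : IsBlock S b₂) (hne : b₁ ≠ b₂) :
    ∃ p ∈ S, ((b₁ ⊆ p.1 ∧ b₂ ⊆ p.2) ∨ (b₁ ⊆ p.2 ∧ b₂ ⊆ p.1)) ∧
      ¬ b₁ ⊆ p.1 ∩ p.2 ∧ ¬ b₂ ⊆ p.1 ∩ p.2 := by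
  by_cases hins : Insep S (b₁ ∪ b₂)
  · exact absurd ((h1.2 _ hins subset_union_left).symm.trans
      (h2.2 _ hins subset_union_right)) hne
  · simp only [Insep, not_forall] at hins
    obtain ⟨p, hp, hsep⟩ := hins
    rw [not_not] at hsep
    have hcover := (hS p hp).1
    have side : ∀ b : Set V, ¬ SepSeparates p b → b ⊆ p.1 ∨ b ⊆ p.2 := by
      intro b hb
      rw [SepSeparates, not_and_or] at hb
      rcases hb with hb | hb
      · right; intro v hv
        rcases (Set.eq_univ_iff_forall.mp hcover v) with h | h
        · by_cases hv2 : v ∈ p.2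
          · exact hv2
          · exact absurd ⟨v, hv, h, hv2⟩ hb
        · exact h
      · left; intro v hv
        rcases (Set.eq_univ_iff_forall.mp hcover v) with h | h
        · exact h
        · by_cases hv1 : v ∈ p.1
          · exact hv1
          · exact absurd ⟨v, hv, h, hv1⟩ hb
    have hn1 := h1.1 p hp
    have hn2 := h2.1 p hp
    obtain ⟨⟨x, hxb, hx1, hx2⟩, ⟨y, hyb, hy2, hy1⟩⟩ := hsep
    refine ⟨p, hp, ?_⟩
    rcases hxb with hx | hx <;> rcases hyb with hy | hy
    · exact absurd ⟨⟨x, hx, hx1, hx2⟩, ⟨y, hy, hy2, hy1⟩⟩ hn1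
    · have hb1 : b₁ ⊆ p.1 := by
        rcases side b₁ hn1 with h | h
        · exact h
        · exact absurd (h hx) hx2
      have hb2 : b₂ ⊆ p.2 := by
        rcases side b₂ hn2 with h | h
        · exact absurd (h hy) hy1
        · exact h
      exact ⟨Or.inl ⟨hb1, hb2⟩,
        fun h => hx2 (h hx).2, fun h => hy1 (h hy).1⟩
    · have hb2 : b₂ ⊆ p.1 := by
        rcases side b₂ hn2 with h | h
        · exact h
        · exact absurd (h hx) hx2
      have hb1 : b₁ ⊆ p.2 := by
        rcases side b₁ hn1 with h | h
        · exact absurd (h hy) hy1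
        · exact h
      exact ⟨Or.inr ⟨hb1, hb2⟩,
        fun h => hy1 (h hy).1, fun h => hx2 (h hx).2⟩
    · exact absurd ⟨⟨x, hx, hx1, hx2⟩, ⟨y, hy, hy2, hy1⟩⟩ hn2
end

section
/- Let N be a nested separation system of a finite graph G. Define (A,B) ∼ (C,D) iff (A,B) = (C,D) or (B,A) is a predecessor of (C,D) in the partial order ≤ restricted to N. Then ∼ is an equivalence relation on N. -/
open Set

variable {V : Type*}

lemma flipSep_flipSep (p : Set V × Set V) : flipSep (flipSep p) = p := rfl

/-- If `p` covers `V` and both of its sides are contained in `q.1`, then `q` is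
not proper. -/
lemma cover_contra {p q : Set V × Set V} (hp : p.1 ∪ p.2 = Set.univ)
    (hq : (q.2 \ q.1).Nonempty) (h1 : p.1 ⊆ q.1) (h2 : p.2 ⊆ q.1) : False := by
  obtain ⟨v, hv2, hv1⟩ := hq
  have : v ∈ p.1 ∪ p.2 := by rw [hp]; trivial
  rcases this with h | h
  · exact hv1 (h1 h)
  · exact hv1 (h2 h)

/-- Symmetry core: if `flipSep p` is a predecessor of `q`, then `flipSep q` is a
predecessor of `p`. -/
lemma sepPred_symm {N : Set (Set V × Set V)} {p q : Set V × Set V}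
    (hsym : ∀ s ∈ N, flipSep s ∈ N)
    (hp : p ∈ N) (hq : q ∈ N) (h : SepPred N (flipSep p) q) :
    SepPred N (flipSep q) p := by
  obtain ⟨-, -, ⟨⟨h1, h2⟩, hne⟩, hmax⟩ := h
  refine ⟨hsym q hq, hp, ⟨⟨h2, h1⟩, ?_⟩, ?_⟩
  · intro hEq
    exact hne (by rw [← hEq]; rfl)
  · rintro s hs ⟨⟨⟨ha1, ha2⟩, hane⟩, ⟨⟨hb1, hb2⟩, hbne⟩⟩
    refine hmax (flipSep s) (hsym s hs) ⟨⟨⟨hb2, hb1⟩, ?_⟩, ⟨⟨ha2, ha1⟩, ?_⟩⟩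
    · intro hEq
      exact hbne (by rw [← flipSep_flipSep s, ← hEq]; exact flipSep_flipSep p)
    · intro hEq
      exact hane (by rw [← hEq]; rfl)

/-- The relation `∼` is an equivalence relation on a nested separation
system `N`. -/
theorem simRel_equivalence [Fintype V] (G : SimpleGraph V) (N : Set (Set V × Set V))
    (hN : NestedSys G N) :
    (∀ p ∈ N, SimRel N p p) ∧
    (∀ p ∈ N, ∀ q ∈ N, SimRel N p q → SimRel N q p) ∧
    (∀ p ∈ N, ∀ q ∈ N, ∀ r ∈ N, SimRel N p q → SimRel N q r → SimRel N p r) := by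
  
  classical
  obtain ⟨⟨hprop, hsym⟩, hnest⟩ := hN
  refine ⟨fun p _ => Or.inl rfl, fun p hp q hq h => ?_, fun p hp q hq r hr hpq hqr => ?_⟩
  · rcases h with h | h
    · exact Or.inl h.symm
    · exact Or.inr (sepPred_symm hsym hp hq h)
  · rcases hpq with rfl | hpq
    · exact hqr
    rcases hqr with rfl | hqr
    · exact Or.inr hpq
    have hrq := sepPred_symm hsym hq hr hqr
    obtain ⟨-, -, ⟨⟨hpq1, hpq2⟩, hpqne⟩, hpqmax⟩ := hpq
    obtain ⟨-, -, ⟨⟨hqr1, hqr2⟩, hqrne⟩, hqrmax⟩ := hqr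
    obtain ⟨-, -, ⟨⟨hrq1, hrq2⟩, hrqne⟩, hrqmax⟩ := hrq
    have hpSep : p.1 ∪ p.2 = Set.univ := (hprop p hp).1.1
    have hqSep : q.1 ∪ q.2 = Set.univ := (hprop q hq).1.1
    have hpProp : (p.2 \ p.1).Nonempty := (hprop p hp).2.2
    have hqProp : (q.2 \ q.1).Nonempty := (hprop q hq).2.2
    have hrProp : (r.2 \ r.1).Nonempty := (hprop r hr).2.2
    rcases hnest (flipSep p) (hsym p hp) (flipSep r) (hsym r hr) with
      (⟨h1, h2⟩ | ⟨h1, h2⟩) | (⟨h1, h2⟩ | ⟨h1, h2⟩)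
    -- Case A1 : flipSep p ≤ flipSep r
    · by_cases heq : p = r
      · exact Or.inl heq
      · exact absurd
          (hpqmax (flipSep r) (hsym r hr)
            ⟨⟨⟨h1, h2⟩, fun hEq => heq (by
              rw [← flipSep_flipSep p, hEq, flipSep_flipSep])⟩,
             ⟨⟨hrq1, hrq2⟩, hrqne⟩⟩) (fun h => h)
    -- Case A2 : flipSep r ≤ flipSep p
    · by_cases heq : p = r
      · exact Or.inl heq
      · exact absurd
          (hrqmax (flipSep p) (hsym p hp)
            ⟨⟨⟨h1, h2⟩, fun hEq => heq (by
              rw [← flipSep_flipSep p, ← hEq, flipSep_flipSep])⟩,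
             ⟨⟨hpq1, hpq2⟩, hpqne⟩⟩) (fun h => h)
    -- Case B1 : flipSep p ≤ r
    · by_cases heq : flipSep p = r
      · subst heq
        exact absurd (cover_contra hpSep hqProp hqr2 hpq1) (fun h => h)
      · refine Or.inr ⟨hsym p hp, hr, ⟨⟨h1, h2⟩, heq⟩, ?_⟩
        rintro s hs ⟨⟨⟨ha1, ha2⟩, hane⟩, ⟨⟨hb1, hb2⟩, hbne⟩⟩
        rcases hnest s hs q hq with (⟨hc1, hc2⟩ | ⟨hc1, hc2⟩) | (⟨hc1, hc2⟩ | ⟨hc1, hc2⟩)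
        · by_cases hsq : s = q
          · subst hsq
            exact cover_contra hqSep hrProp hb1 hqr1
          · exact hpqmax s hs ⟨⟨⟨ha1, ha2⟩, hane⟩, ⟨⟨hc1, hc2⟩, hsq⟩⟩
        · exact cover_contra hqSep hrProp (hc1.trans hb1) hqr1
        · exact cover_contra hqSep hpProp (hc2.trans ha2) hpq2
        · by_cases hqs : flipSep q = s
          · subst hqs
            exact cover_contra hqSep hpProp ha2 hpq2
          · exact hqrmax s hs ⟨⟨⟨hc1, hc2⟩, hqs⟩, ⟨⟨hb1, hb2⟩, hbne⟩⟩
    -- Case B2 : r ≤ flipSep p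
    · exact absurd (cover_contra hpSep hqProp (hqr2.trans' h2) (hpq1)) (fun h => h)
end

section
/- Let N be a nested separation system of a finite graph G, and let T(N) be the multigraph whose nodes are the ∼-equivalence classes of N and whose edges are the pairs {(A,B),(B,A)} for (A,B) ∈ N, joining [(A,B)] to [(B,A)]. Then T(N) is a tree. -/
/-!
The relation `∼` glues `p*` to the separations of which `p*` is a predecessor. In a nested system
of proper separations, two distinct predecessors `a, b` of the same separation satisfy
`a < b*` with nothing in between, which makes `∼` transitive. Every `p ≤ q` in `N` is joined by a
chain of predecessors, i.e. by a walk `[p] – [p*] = [r₁] – [r₁*] = … = [q]`, and nestedness links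
any two separations this way, so `T(N)` is connected. Along a trail leaving `[p]` through the
edge of `p`, every node reached is `[q*]` for some `q ≥ p`, so a trail can never return to `[p]`.
-/

open Set

variable {V : Type*}

/-- The adjacency used to build the structure tree: two nodes (equivalence classes)
are related if some separation `p ∈ N` has one as `[p]` and the other as `[flip p]`. -/
def nodeRel (N : Set (Set V × Set V))
    (s t : {t : Set (Set V × Set V) // ∃ p ∈ N, t = classOf N p}) : Prop :=
  ∃ p ∈ N, s.val = classOf N p ∧ t.val = classOf N (flipSep p)

lemma flipSep_injective : Function.Injective (flipSep : Set V × Set V → Set V × Set V) :=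
  fun _ _ h => congrArg flipSep h

section Order

variable {p q r : Set V × Set V}

lemma SepLE.refl (p : Set V × Set V) : SepLE p p := ⟨subset_rfl, subset_rfl⟩

lemma SepLE.trans (h₁ : SepLE p q) (h₂ : SepLE q r) : SepLE p r :=
  ⟨h₁.1.trans h₂.1, h₂.2.trans h₁.2⟩

lemma SepLE.antisymm (h₁ : SepLE p q) (h₂ : SepLE q p) : p = q :=
  Prod.ext (h₁.1.antisymm h₂.1) (h₂.2.antisymm h₁.2)

lemma sepLE_flipSep_flipSep : SepLE (flipSep p) (flipSep q) ↔ SepLE q p := And.comm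

lemma sepLE_flipSep_left : SepLE (flipSep p) q ↔ SepLE (flipSep q) p := And.comm

lemma sepLE_flipSep_right : SepLE p (flipSep q) ↔ SepLE q (flipSep p) := And.comm

lemma SepLT.not_sepLE (h : SepLT p q) : ¬ SepLE q p := fun h' => h.2 (h.1.antisymm h')

lemma sepLT_flipSep_flipSep : SepLT (flipSep p) (flipSep q) ↔ SepLT q p :=
  and_congr sepLE_flipSep_flipSep (flipSep_injective.ne_iff.trans ne_comm)

lemma sepLT_flipSep_right : SepLT p (flipSep q) ↔ SepLT q (flipSep p) :=
  and_congr sepLE_flipSep_right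
    ⟨fun h e => h (by rw [e]; rfl), fun h e => h (by rw [e]; rfl)⟩

/-- `SepLE` is the product order on `Set V × (Set V)ᵒᵈ`. -/
def sepKey (p : Set V × Set V) : Set V × (Set V)ᵒᵈ := (p.1, OrderDual.toDual p.2)

lemma sepKey_injective : Function.Injective (sepKey : Set V × Set V → Set V × (Set V)ᵒᵈ) :=
  fun _ _ h => Prod.ext (congrArg Prod.fst h)
    (congrArg (fun k : Set V × (Set V)ᵒᵈ => OrderDual.ofDual k.2) h)

lemma wellFounded_sepLT [Finite V] : WellFounded (SepLT : Set V × Set V → _ → Prop) :=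
  Subrelation.wf (fun h => lt_of_le_of_ne h.1 (sepKey_injective.ne h.2))
    (InvImage.wf sepKey wellFounded_lt)

end Order

section Proper

variable {p q : Set V × Set V}

lemma IsProper.flip (hp : IsProper p) : IsProper (flipSep p) := hp.symm

lemma IsProper.ne_flipSep (hp : IsProper p) : p ≠ flipSep p := by
  intro h
  obtain ⟨x, hx₁, hx₂⟩ := hp.1
  have h₁ : p.1 = p.2 := congrArg Prod.fst h
  exact hx₂ (h₁ ▸ hx₁)

lemma IsProper.not_sepLE_flipSep_of_sepLE (hp : IsProper p) (h : SepLE p q) :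
    ¬ SepLE p (flipSep q) := by
  intro h'
  obtain ⟨x, hx₁, hx₂⟩ := hp.1
  exact hx₂ (h'.2 (h.1 hx₁))

lemma IsProper.not_sepLE_of_flipSep_sepLE (hq : IsProper q) (h : SepLE p q) :
    ¬ SepLE (flipSep p) q := fun h' =>
  hq.flip.not_sepLE_flipSep_of_sepLE (sepLE_flipSep_left.mp h') (sepLE_flipSep_flipSep.mpr h)

end Proper

structure ProperNestedSystem (N : Set (Set V × Set V)) : Prop where
  proper : ∀ p ∈ N, IsProper p
  flipSep_mem : ∀ p ∈ N, flipSep p ∈ N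
  nested : ∀ p ∈ N, ∀ q ∈ N, Nested p q

lemma NestedSys.properNestedSystem {G : SimpleGraph V} {N : Set (Set V × Set V)}
    (hN : NestedSys G N) : ProperNestedSystem N :=
  ⟨fun p hp => (hN.1.1 p hp).2, hN.1.2, hN.2⟩

variable {N : Set (Set V × Set V)} {p q r a b : Set V × Set V}

section Predecessor

lemma SepPred.sepLT (h : SepPred N a b) : SepLT a b := h.2.2.1

lemma SepPred.flip (hsym : ∀ p ∈ N, flipSep p ∈ N) (h : SepPred N a b) :
    SepPred N (flipSep b) (flipSep a) := by
  obtain ⟨ha, hb, hab, hmin⟩ := h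
  refine ⟨hsym b hb, hsym a ha, sepLT_flipSep_flipSep.mpr hab, fun s hs ⟨hbs, hsa⟩ => ?_⟩
  exact hmin (flipSep s) (hsym s hs)
    ⟨sepLT_flipSep_flipSep.mp hsa, sepLT_flipSep_flipSep.mp hbs⟩

lemma SepPred.sepLT_flipSep (hN : ProperNestedSystem N) (ha : SepPred N a q)
    (hb : SepPred N b q) (hab : a ≠ b) : SepLT a (flipSep b) := by
  have hq := hN.proper q ha.2.1
  rcases hN.nested a ha.1 b hb.1 with (h | h) | (h | h)
  · exact absurd ⟨⟨h, hab⟩, hb.sepLT⟩ (ha.2.2.2 b hb.1)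
  · exact absurd ⟨⟨h, hab.symm⟩, ha.sepLT⟩ (hb.2.2.2 a ha.1)
  · refine ⟨h, fun e => hq.not_sepLE_of_flipSep_sepLE hb.sepLT.1 ?_⟩
    exact e ▸ ha.sepLT.1
  · exact absurd (h.trans ha.sepLT.1) (hq.not_sepLE_of_flipSep_sepLE hb.sepLT.1)

lemma SepPred.sepPred_flipSep (hN : ProperNestedSystem N) (ha : SepPred N a q)
    (hb : SepPred N b q) (hab : a ≠ b) : SepPred N a (flipSep b) := by
  have hq := ha.2.1
  have haq := ha.sepLT.1
  have hbq := hb.sepLT.1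
  refine ⟨ha.1, hN.flipSep_mem b hb.1, ha.sepLT_flipSep hN hb hab, fun s hs ⟨has, hsb⟩ => ?_⟩
  have hb_not : ¬ SepLE b (flipSep b) :=
    (hN.proper b hb.1).not_sepLE_flipSep_of_sepLE (SepLE.refl b)
  have ha_not : ¬ SepLE a (flipSep q) := (hN.proper a ha.1).not_sepLE_flipSep_of_sepLE haq
  rcases hN.nested s hs q hq with (h | h) | (h | h)
  · by_cases hsq : s = q
    · exact hb_not (hbq.trans (hsq ▸ hsb.1))
    · exact ha.2.2.2 s hs ⟨has, h, hsq⟩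
  · exact hb_not (hbq.trans (h.trans hsb.1))
  · exact ha_not (has.1.trans h)
  · by_cases hsq : flipSep s = q
    · exact ha_not (hsq ▸ has.1)
    · exact hb.2.2.2 (flipSep s) (hN.flipSep_mem s hs)
        ⟨sepLT_flipSep_right.mp hsb, sepLE_flipSep_left.mp h, hsq⟩

lemma exists_sepLE_sepPred [Finite V] (hp : p ∈ N) (hq : q ∈ N) (hpq : SepLT p q) :
    ∃ r, SepLE p r ∧ SepPred N r q := by
  obtain ⟨r, ⟨hr, hpr, hrq⟩, hmax⟩ :=
    (Set.toFinite {s | s ∈ N ∧ SepLE p s ∧ SepLT s q}).exists_maximalFor sepKey _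
      ⟨p, hp, SepLE.refl p, hpq⟩
  refine ⟨r, hpr, hr, hq, hrq, fun s hs ⟨hrs, hsq⟩ => hrs.2 (sepKey_injective ?_)⟩
  exact le_antisymm hrs.1 (hmax ⟨hs, hpr.trans hrs.1, hsq⟩ hrs.1)

end Predecessor

section Equivalence

lemma SimRel.symm (hsym : ∀ p ∈ N, flipSep p ∈ N) (h : SimRel N p q) : SimRel N q p :=
  h.elim (fun e => Or.inl e.symm) (fun h => Or.inr (h.flip hsym))

lemma SimRel.trans (hN : ProperNestedSystem N) (h₁ : SimRel N p q) (h₂ : SimRel N q r) :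
    SimRel N p r := by
  rcases h₁ with rfl | h₁
  · exact h₂
  rcases h₂ with rfl | h₂
  · exact Or.inr h₁
  by_cases hpr : p = r
  · exact Or.inl hpr
  exact Or.inr (h₁.sepPred_flipSep hN (h₂.flip hN.flipSep_mem)
    (flipSep_injective.ne hpr))

lemma classOf_eq_classOf_iff (hN : ProperNestedSystem N) (hq : q ∈ N) :
    classOf N p = classOf N q ↔ SimRel N p q := by
  refine ⟨fun h => (h ▸ ⟨hq, Or.inl rfl⟩ : q ∈ classOf N p).2, fun h => ?_⟩
  ext s
  exact and_congr_right fun _ =>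
    ⟨(h.symm hN.flipSep_mem).trans hN, h.trans hN⟩

lemma classOf_ne_classOf_flipSep (hN : ProperNestedSystem N) (hp : p ∈ N) :
    classOf N p ≠ classOf N (flipSep p) := by
  rw [Ne, classOf_eq_classOf_iff hN (hN.flipSep_mem p hp)]
  rintro (h | h)
  · exact (hN.proper p hp).ne_flipSep h
  · exact h.sepLT.2 rfl

lemma eq_of_classOf_eq_of_classOf_flipSep_eq (hN : ProperNestedSystem N) (hq : q ∈ N)
    (h : classOf N p = classOf N q) (h' : classOf N (flipSep p) = classOf N (flipSep q)) :
    p = q := by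
  rw [classOf_eq_classOf_iff hN hq] at h
  rw [classOf_eq_classOf_iff hN (hN.flipSep_mem q hq)] at h'
  rcases h with h | h
  · exact h
  rcases h' with h' | h'
  · exact flipSep_injective h'
  -- `p* < q` and `p < q*`, i.e. `q < p*`
  exact absurd h.sepLT.1 (sepLT_flipSep_right.mp h'.sepLT).not_sepLE

end Equivalence

section StructureTree

abbrev StructureNode (N : Set (Set V × Set V)) : Type _ :=
  {t : Set (Set V × Set V) // ∃ p ∈ N, t = classOf N p}

abbrev structureTree (N : Set (Set V × Set V)) : SimpleGraph (StructureNode N) :=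
  SimpleGraph.fromRel (nodeRel N)

def node (hp : p ∈ N) : StructureNode N := ⟨classOf N p, p, hp, rfl⟩

lemma node_eq_node_iff (hN : ProperNestedSystem N) (hp : p ∈ N) (hq : q ∈ N) :
    node hp = node hq ↔ SimRel N p q :=
  Subtype.ext_iff.trans (classOf_eq_classOf_iff hN hq)

lemma structureTree_adj_node (hN : ProperNestedSystem N) (hp : p ∈ N) (hp' : flipSep p ∈ N) :
    (structureTree N).Adj (node hp) (node hp') := by
  rw [SimpleGraph.fromRel_adj]
  exact ⟨fun h => classOf_ne_classOf_flipSep hN hp (congrArg Subtype.val h),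
    Or.inl ⟨p, hp, rfl, rfl⟩⟩

lemma exists_eq_node_of_adj (hsym : ∀ p ∈ N, flipSep p ∈ N) {u v : StructureNode N}
    (h : (structureTree N).Adj u v) :
    ∃ r, ∃ hr : r ∈ N, ∃ hr' : flipSep r ∈ N, u = node hr ∧ v = node hr' := by
  rw [SimpleGraph.fromRel_adj] at h
  rcases h.2 with ⟨r, hr, hu, hv⟩ | ⟨r, hr, hv, hu⟩
  · exact ⟨r, hr, hsym r hr, Subtype.ext hu, Subtype.ext hv⟩
  · exact ⟨flipSep r, hsym r hr, hr, Subtype.ext hu, Subtype.ext hv⟩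

lemma reachable_node_of_sepLE [Finite V] (hN : ProperNestedSystem N) (hp : p ∈ N) (hq : q ∈ N)
    (hpq : SepLE p q) : (structureTree N).Reachable (node hp) (node hq) := by
  have wf := wellFounded_sepLT (V := V)
  induction q using wf.induction with
  | _ q ih =>
  by_cases e : p = q
  · subst e; exact SimpleGraph.Reachable.refl _
  obtain ⟨r, hpr, hrq⟩ := exists_sepLE_sepPred hp hq ⟨hpq, e⟩
  have hr' := hN.flipSep_mem r hrq.1
  have hrq' : node hr' = node hq := (node_eq_node_iff hN hr' hq).mpr (Or.inr hrq)
  exact (ih r hrq.sepLT hrq.1 hpr).trans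
    (hrq' ▸ (structureTree_adj_node hN hrq.1 hr').reachable)

lemma structureTree_connected [Finite V] (hN : ProperNestedSystem N) (hne : N.Nonempty) :
    (structureTree N).Connected := by
  obtain ⟨p, hp⟩ := hne
  refine (SimpleGraph.connected_iff_exists_forall_reachable _).mpr ⟨node hp, ?_⟩
  rintro ⟨_, q, hq, rfl⟩
  change (structureTree N).Reachable (node hp) (node hq)
  have hq' := hN.flipSep_mem q hq
  have hflip := (structureTree_adj_node hN hq' hq).reachable
  rcases hN.nested p hp q hq with (h | h) | (h | h)
  · exact reachable_node_of_sepLE hN hp hq h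
  · exact (reachable_node_of_sepLE hN hq hp h).symm
  · exact (reachable_node_of_sepLE hN hp hq' h).trans hflip
  · exact (reachable_node_of_sepLE hN hq' hp h).symm.trans hflip

lemma exists_sepLE_of_isTrail (hN : ProperNestedSystem N) {u v : StructureNode N}
    {w : (structureTree N).Walk u v} (hw : w.IsTrail) (hp : p ∈ N) (hp' : flipSep p ∈ N)
    (hu : u = node hp') (hpw : s(node hp, node hp') ∉ w.edges) :
    ∃ q, ∃ hq : q ∈ N, ∃ hq' : flipSep q ∈ N, SepLE p q ∧ v = node hq' ∧
      (q = p ∨ s(node hq, node hq') ∈ w.edges) := by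
  induction w generalizing p with
  | nil => exact ⟨p, hp, hp', SepLE.refl p, hu, Or.inl rfl⟩
  | cons h w ih =>
    obtain ⟨r, hr, hr', rfl, rfl⟩ := exists_eq_node_of_adj hN.flipSep_mem h
    rw [SimpleGraph.Walk.isTrail_cons] at hw
    rw [SimpleGraph.Walk.edges_cons, List.mem_cons, not_or] at hpw
    rcases (node_eq_node_iff hN hp' hr).mp hu.symm with rfl | hpr
    · exact absurd Sym2.eq_swap hpw.1
    obtain ⟨q, hq, hq', hrq, hv, hqw⟩ := ih hw.1 hr hr' rfl hw.2
    refine ⟨q, hq, hq', hpr.sepLT.1.trans hrq, hv, Or.inr ?_⟩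
    rw [SimpleGraph.Walk.edges_cons, List.mem_cons]
    rcases hqw with rfl | hqw
    · exact Or.inl rfl
    · exact Or.inr hqw

lemma structureTree_isAcyclic (hN : ProperNestedSystem N) : (structureTree N).IsAcyclic := by
  intro v c hc
  cases c with
  | nil => exact hc.ne_nil rfl
  | cons h w =>
    obtain ⟨p, hp, hp', rfl, rfl⟩ := exists_eq_node_of_adj hN.flipSep_mem h
    obtain ⟨hw, hpw⟩ := (SimpleGraph.Walk.isTrail_cons _ _).mp hc.isTrail
    obtain ⟨q, hq, hq', hpq, hv, hqw⟩ := exists_sepLE_of_isTrail hN hw hp hp' rfl hpw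
    rcases (node_eq_node_iff hN hp hq').mp hv with rfl | hqp
    · rcases hqw with e | hqw
      · exact (hN.proper q hq).ne_flipSep e
      · exact hpw (Sym2.eq_swap ▸ hqw)
    · exact (sepLT_flipSep_flipSep.mp hqp.sepLT).not_sepLE hpq

end StructureTree

/-- The structure tree `T(N)` of a (nonempty) nested separation system
is a tree: the graph on the `∼`-classes is a tree, no edge is a loop, and separations
defining the same edge coincide up to flipping (no parallel edges). -/
theorem structureTree_isTree [Fintype V] (G : SimpleGraph V) (N : Set (Set V × Set V))
    (hN : NestedSys G N) (hne : N.Nonempty) :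
    (SimpleGraph.fromRel (nodeRel N)).IsTree ∧
    (∀ p ∈ N, classOf N p ≠ classOf N (flipSep p)) ∧
    (∀ p ∈ N, ∀ q ∈ N,
      ({classOf N p, classOf N (flipSep p)} : Set (Set (Set V × Set V))) =
        {classOf N q, classOf N (flipSep q)} → q = p ∨ q = flipSep p) := by
  have hN := hN.properNestedSystem
  refine ⟨⟨structureTree_connected hN hne, structureTree_isAcyclic hN⟩,
    fun p hp => classOf_ne_classOf_flipSep hN hp, fun p hp q hq h => ?_⟩
  rcases Set.pair_eq_pair_iff.mp h with ⟨h₁, h₂⟩ | ⟨h₁, h₂⟩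
  · exact Or.inl (eq_of_classOf_eq_of_classOf_flipSep_eq hN hp h₁.symm h₂.symm)
  · exact Or.inr (eq_of_classOf_eq_of_classOf_flipSep_eq hN (hN.flipSep_mem p hp) h₂.symm h₁.symm)
end

section
/- Let N be a nested separation system of a finite graph G, T = T(N) its structure tree, and for each node t of T let V_t = ⋂{A : (A,B) ∈ t}. Then every set V_t is N-inseparable. -/
open Set

variable {V : Type*}

lemma sepLE_trans {p q r : Set V × Set V} (h1 : SepLE p q) (h2 : SepLE q r) : SepLE p r :=
  ⟨h1.1.trans h2.1, h2.2.trans h1.2⟩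

lemma exists_pred [Fintype V] {N : Set (Set V × Set V)} {a q : Set V × Set V}
    (ha : a ∈ N) (hq : q ∈ N) (h : SepLT a q) :
    ∃ r ∈ N, SepPred N a r ∧ SepLE r q := by
  classical
  set S : Set (Set V × Set V) := {r | r ∈ N ∧ SepLT a r ∧ SepLE r q} with hS
  have hfin : S.Finite := Set.toFinite _
  have hne : S.Nonempty := ⟨q, hq, h, ⟨subset_rfl, subset_rfl⟩⟩
  obtain ⟨r, hrS, hmin⟩ := Set.exists_min_image S (fun r => r.1.ncard + r.2ᶜ.ncard) hfin hne
  refine ⟨r, hrS.1, ⟨ha, hrS.1, hrS.2.1, ?_⟩, hrS.2.2⟩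
  rintro s hs ⟨has, hsr⟩
  have hsS : s ∈ S := ⟨hs, has, sepLE_trans hsr.1 hrS.2.2⟩
  have h1 : s.1.ncard ≤ r.1.ncard := Set.ncard_le_ncard hsr.1.1 (Set.toFinite _)
  have h2 : s.2ᶜ.ncard ≤ r.2ᶜ.ncard :=
    Set.ncard_le_ncard (compl_subset_compl.mpr hsr.1.2) (Set.toFinite _)
  have hle := hmin s hsS
  have e1 : s.1.ncard = r.1.ncard := by omega
  have e2 : s.2ᶜ.ncard = r.2ᶜ.ncard := by omega
  have k1 : s.1 = r.1 := Set.eq_of_subset_of_ncard_le hsr.1.1 e1.ge (Set.toFinite _)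
  have k2 : s.2ᶜ = r.2ᶜ :=
    Set.eq_of_subset_of_ncard_le (compl_subset_compl.mpr hsr.1.2) e2.ge (Set.toFinite _)
  exact hsr.2 (Prod.ext k1 (by simpa using congrArg compl k2))

/-- Every part `V_t` of the structure tree of a nested separation
system `N` is `N`-inseparable. -/
theorem vpart_insep [Fintype V] (G : SimpleGraph V) (N : Set (Set V × Set V))
    (hN : NestedSys G N) :
    ∀ t : Set (Set V × Set V), (∃ p ∈ N, t = classOf N p) → Insep N (Vpart t) := by
  classical
  rintro t ⟨p, hp, rfl⟩ q hq ⟨⟨x, hx⟩, ⟨y, hy⟩⟩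
  have hpt : p ∈ classOf N p := ⟨hp, Or.inl rfl⟩
  have hx2 : x ∉ q.2 := hx.2.2
  have hy2 : y ∉ q.1 := hy.2.2
  have hxt : ∀ r ∈ classOf N p, x ∈ r.1 := hx.1
  have hyt : ∀ r ∈ classOf N p, y ∈ r.1 := hy.1
  have hxp : x ∈ p.1 := hxt p hpt
  have hyp : y ∈ p.1 := hyt p hpt
  have hflipN : ∀ r ∈ N, flipSep r ∈ N := hN.1.2
  rcases hN.2 p hp q hq with (h | h) | (h | h)
  · exact hy2 (h.1 hyp)
  · by_cases hpq : p = q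
    · subst hpq; exact hy2 hyp
    · have hlt : SepLT (flipSep p) (flipSep q) :=
        ⟨⟨h.2, h.1⟩, fun he => hpq (by simpa [flipSep] using congrArg flipSep he)⟩
      obtain ⟨r, hrN, hpred, hle⟩ := exists_pred (hflipN p hp) (hflipN q hq) hlt
      exact hx2 (hle.1 (hxt r ⟨hrN, Or.inr hpred⟩))
  · exact hx2 (h.1 hxp)
  · by_cases hpq : flipSep p = q
    · rw [← hpq] at hx2; exact hx2 hxp
    · have hlt : SepLT (flipSep p) q := ⟨⟨h.2, h.1⟩, hpq⟩
      obtain ⟨r, hrN, hpred, hle⟩ := exists_pred (hflipN p hp) hq hlt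
      exact hy2 (hle.1 (hyt r ⟨hrN, Or.inr hpred⟩))
end

section
/- Let N be a nested separation system of a finite graph G and T(N) its structure tree with parts V_t = ⋂{A : (A,B) ∈ t}. Whenever (A,B) ∈ t for a node t of T(N), we have A∩B ⊆ V_t. In particular, if V_t ⊆ A∩B then V_t = A∩B. -/
open Set

variable {V : Type*}

/-- Whenever `(A,B) ∈ t` for a node `t` of the structure tree, we have
`A∩B ⊆ V_t`; in particular if `V_t ⊆ A∩B` then `V_t = A∩B`. -/
theorem separator_subset_vpart [Fintype V] (G : SimpleGraph V) (N : Set (Set V × Set V))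
    (hN : NestedSys G N) :
    ∀ t : Set (Set V × Set V), (∃ p ∈ N, t = classOf N p) →
      ∀ q ∈ t, q.1 ∩ q.2 ⊆ Vpart t ∧ (Vpart t ⊆ q.1 ∩ q.2 → Vpart t = q.1 ∩ q.2) := by
  rintro t ⟨p, hpN, rfl⟩ q hq
  have key : ∀ r ∈ classOf N p, q.1 ∩ q.2 ⊆ r.1 := by
    rintro r ⟨hrN, hr⟩
    obtain ⟨hqN, hq'⟩ := hq
    rcases hq' with rfl | hq'
    · rcases hr with rfl | hr
      · exact Set.inter_subset_left
      · exact fun v hv => hr.2.2.1.1.1 hv.2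
    · rcases hr with rfl | hr
      · exact fun v hv => hq'.2.2.1.1.2 hv.2
      · rcases hN.2 q hqN r hrN with (h | h) | (h | h)
        · exact fun v hv => h.1 hv.1
        · by_cases hrq : r = q
          · subst hrq; exact Set.inter_subset_left
          · exfalso
            exact hq'.2.2.2 r hrN ⟨hr.2.2.1, ⟨h, hrq⟩⟩
        · exfalso
          have hrsep := (hN.1.1 r hrN).1.1
          obtain ⟨x, hx2, hx1⟩ := (hN.1.1 p hpN).2.2
          have hr1 : r.1 ⊆ p.1 := fun v hv => hq'.2.2.1.1.2 (h.2 hv)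
          have hr2 : r.2 ⊆ p.1 := hr.2.2.1.1.2
          have hx : x ∈ r.1 ∪ r.2 := hrsep ▸ Set.mem_univ x
          cases hx with
          | inl hh => exact hx1 (hr1 hh)
          | inr hh => exact hx1 (hr2 hh)
        · exact fun v hv => h.2 hv.2
  exact ⟨fun v hv r hr => key r hr hv,
    fun hsub => Set.Subset.antisymm hsub fun v hv r hr => key r hr hv⟩
end

section
/- Let R be a separation system of a finite graph G, I a set of R-inseparable vertex sets such that every separation in R weakly separates some two sets in I, and suppose R separates I well. Then every ≤-minimal element of R is extremal in R; in particular, if R is nonempty then R contains an extremal separation. -/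
open Set

variable {V : Type*}

/-!
Let `p ∈ R` be `≤`-minimal and `q ∈ R`. If `p` and `q` are nested, minimality rules out
`q < p` and `q* < p`, leaving `p ≤ q` or `p ≤ q*`. If they cross, every set of `I` lies in a
corner of their cross-diagram, and the sets witnessing that `p` and `q` are relevant put two of
them in opposite corners, either of `p` and `q` or of `p` and `q*`. Separating these two well
gives `r ∈ R` with `r ≤ p` and `r ≤ q` (resp. `r ≤ q*`), and minimality forces `r = p`.
-/

def OppositeCorners (I : Set (Set V)) (p q : Set V × Set V) : Prop :=
  ∃ X ∈ I, ∃ Y ∈ I, X ⊆ p.1 ∩ q.1 ∧ Y ⊆ p.2 ∩ q.2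

lemma subset_or_subset_of_not_sepSeparates {p : Set V × Set V} {U : Set V}
    (hcover : p.1 ∪ p.2 = univ) (h : ¬ SepSeparates p U) : U ⊆ p.1 ∨ U ⊆ p.2 := by
  by_contra! hU
  obtain ⟨u, huU, hu₁⟩ := not_subset.1 hU.1
  obtain ⟨v, hvU, hv₂⟩ := not_subset.1 hU.2
  have hu₂ : u ∈ p.2 := (eq_univ_iff_forall.1 hcover u).resolve_left hu₁
  have hv₁ : v ∈ p.1 := (eq_univ_iff_forall.1 hcover v).resolve_right hv₂
  exact h ⟨⟨v, hvU, hv₁, hv₂⟩, ⟨u, huU, hu₂, hu₁⟩⟩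

lemma Insep.subset_or_subset {G : SimpleGraph V} {R : Set (Set V × Set V)}
    (hR : SepSystem G R) {U : Set V} (hU : Insep R U) {p : Set V × Set V} (hp : p ∈ R) :
    U ⊆ p.1 ∨ U ⊆ p.2 :=
  subset_or_subset_of_not_sepSeparates (hR.1 p hp).1.1 (hU p hp)

lemma WeaklySep.exists_subset_fst_subset_snd {I : Set (Set V)} {p : Set V × Set V}
    {I₁ I₂ : Set V} (h₁ : I₁ ∈ I) (h₂ : I₂ ∈ I) (h : WeaklySep p I₁ I₂) :
    ∃ A ∈ I, ∃ B ∈ I, A ⊆ p.1 ∧ B ⊆ p.2 := by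
  rcases h with ⟨hA, hB⟩ | ⟨hB, hA⟩
  exacts [⟨I₁, h₁, I₂, h₂, hA, hB⟩, ⟨I₂, h₂, I₁, h₁, hA, hB⟩]

lemma oppositeCorners_or_oppositeCorners_flipSep {I : Set (Set V)} {p q : Set V × Set V}
    (hside : ∀ U ∈ I, (U ⊆ p.1 ∨ U ⊆ p.2) ∧ (U ⊆ q.1 ∨ U ⊆ q.2))
    (hp : ∃ A ∈ I, ∃ B ∈ I, A ⊆ p.1 ∧ B ⊆ p.2) (hq : ∃ C ∈ I, ∃ D ∈ I, C ⊆ q.1 ∧ D ⊆ q.2) :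
    OppositeCorners I p q ∨ OppositeCorners I p (flipSep q) := by
  obtain ⟨A, hA, B, hB, hAp, hBp⟩ := hp
  obtain ⟨C, hC, D, hD, hCq, hDq⟩ := hq
  rcases (hside A hA).2, (hside B hB).2 with ⟨hAq | hAq, hBq | hBq⟩
  · -- `A` and `B` both lie in `q.1`, so `D` is opposite to one of them
    rcases (hside D hD).1 with hDp | hDp
    · exact .inr ⟨D, hD, B, hB, subset_inter hDp hDq, subset_inter hBp hBq⟩
    · exact .inl ⟨A, hA, D, hD, subset_inter hAp hAq, subset_inter hDp hDq⟩
  · exact .inl ⟨A, hA, B, hB, subset_inter hAp hAq, subset_inter hBp hBq⟩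
  · exact .inr ⟨A, hA, B, hB, subset_inter hAp hAq, subset_inter hBp hBq⟩
  · rcases (hside C hC).1 with hCp | hCp
    · exact .inl ⟨C, hC, B, hB, subset_inter hCp hCq, subset_inter hBp hBq⟩
    · exact .inr ⟨A, hA, C, hC, subset_inter hAp hAq, subset_inter hCp hCq⟩

lemma not_nested_flipSep {p q : Set V × Set V} (h : ¬ Nested p q) : ¬ Nested p (flipSep q) :=
  fun hn ↦ h hn.symm

section Minimal

variable {R : Set (Set V × Set V)} {p q : Set V × Set V}

lemma sepLE_or_sepLE_flipSep_of_nested (hflip : ∀ q ∈ R, flipSep q ∈ R)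
    (hmin : ∀ q ∈ R, SepLE q p → q = p) (hq : q ∈ R) (h : Nested p q) :
    SepLE p q ∨ SepLE p (flipSep q) := by
  rcases h with (hle | hle) | (hle | hle)
  · exact .inl hle
  · exact .inl (hmin q hq hle ▸ ⟨subset_rfl, subset_rfl⟩)
  · exact .inr hle
  · exact .inr (hmin _ (hflip q hq) hle ▸ ⟨subset_rfl, subset_rfl⟩)

lemma sepLE_of_not_nested {I : Set (Set V)} (hwell : SeparatesWell R I) (hp : p ∈ R)
    (hmin : ∀ q ∈ R, SepLE q p → q = p) (hq : q ∈ R) (h : ¬ Nested p q)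
    (hcorners : OppositeCorners I p q) : SepLE p q := by
  obtain ⟨X, hX, Y, hY, hXpq, hYpq⟩ := hcorners
  obtain ⟨r, hr, -, hr₁, hr₂⟩ := hwell p hp q hq h X hX Y hY hXpq hYpq
  obtain rfl : r = p :=
    hmin r hr ⟨hr₁.trans inter_subset_left, subset_union_left.trans hr₂⟩
  exact ⟨hr₁.trans inter_subset_right, subset_union_right.trans hr₂⟩

lemma extremal_of_minimal {G : SimpleGraph V} {I : Set (Set V)} (hR : SepSystem G R)
    (hins : ∀ U ∈ I, Insep R U)
    (hrel : ∀ p ∈ R, ∃ I₁ ∈ I, ∃ I₂ ∈ I, I₁ ≠ I₂ ∧ WeaklySep p I₁ I₂)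
    (hwell : SeparatesWell R I) (hp : p ∈ R) (hmin : ∀ q ∈ R, SepLE q p → q = p) :
    Extremal R p := by
  intro q hq
  by_cases hn : Nested p q
  · exact sepLE_or_sepLE_flipSep_of_nested hR.2 hmin hq hn
  have hside : ∀ U ∈ I, (U ⊆ p.1 ∨ U ⊆ p.2) ∧ (U ⊆ q.1 ∨ U ⊆ q.2) := fun U hU ↦
    ⟨(hins U hU).subset_or_subset hR hp, (hins U hU).subset_or_subset hR hq⟩
  have hwitness : ∀ s ∈ R, ∃ A ∈ I, ∃ B ∈ I, A ⊆ s.1 ∧ B ⊆ s.2 := fun s hs ↦ by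
    obtain ⟨I₁, h₁, I₂, h₂, -, hsep⟩ := hrel s hs
    exact hsep.exists_subset_fst_subset_snd h₁ h₂
  rcases oppositeCorners_or_oppositeCorners_flipSep hside (hwitness p hp) (hwitness q hq)
    with hc | hc
  · exact .inl (sepLE_of_not_nested hwell hp hmin hq hn hc)
  · exact .inr (sepLE_of_not_nested hwell hp hmin (hR.2 q hq) (not_nested_flipSep hn) hc)

lemma exists_minimal_sepLE [Finite V] (hne : R.Nonempty) :
    ∃ p ∈ R, ∀ q ∈ R, SepLE q p → q = p := by
  -- `SepLE` is the product order on `Set V × (Set V)ᵒᵈ`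
  let f : Set V × Set V → Set V × (Set V)ᵒᵈ := fun s ↦ (s.1, OrderDual.toDual s.2)
  obtain ⟨p, hp, hmin⟩ := R.toFinite.exists_minimalFor f R hne
  refine ⟨p, hp, fun q hq hqp ↦ ?_⟩
  have hpq : f p ≤ f q := hmin hq hqp
  exact Prod.ext (hqp.1.antisymm hpq.1) (Subset.antisymm (hpq.2 : q.2 ⊆ p.2) hqp.2)

end Minimal

/-- In an `I`-relevant separation system `R` that separates a set `I`
of `R`-inseparable sets well, every `≤`-minimal separation is extremal; in particular
a nonempty such `R` contains an extremal separation. -/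
theorem minimal_extremal [Fintype V] (G : SimpleGraph V) (R : Set (Set V × Set V))
    (hR : SepSystem G R) (I : Set (Set V)) (hins : ∀ U ∈ I, Insep R U)
    (hrel : ∀ p ∈ R, ∃ I₁ ∈ I, ∃ I₂ ∈ I, I₁ ≠ I₂ ∧ WeaklySep p I₁ I₂)
    (hwell : SeparatesWell R I) :
    (∀ p ∈ R, (∀ q ∈ R, SepLE q p → q = p) → Extremal R p) ∧
    (R.Nonempty → ∃ p ∈ R, Extremal R p) := by
  have hext : ∀ p ∈ R, (∀ q ∈ R, SepLE q p → q = p) → Extremal R p :=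
    fun _ hp hmin ↦ extremal_of_minimal hR hins hrel hwell hp hmin
  refine ⟨hext, fun hne ↦ ?_⟩
  obtain ⟨p, hp, hmin⟩ := exists_minimal_sepLE hne
  exact ⟨p, hp, hext p hp hmin⟩
end
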